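/- Let M[t] be row-stochastic m-by-m matrices and let Psi(r,t) = M[r]...M[t]. Suppose every entry of every product of nB+1 consecutive factors is at least beta^{nB+1} > 0, and let gamma = 1 - beta^{nB+1}. Then for any 1 <= r <= t and any indices j, k, i, |Psi_{k,i}(1,t) - Psi_{j,i}(r,t)| <= gamma^{floor((t-r+1)/(nB+1))}. -/

import Mathlib

/-!
Dobrushin's coupling argument: if every entry of a row-stochastic matrix `A` is at least `c`,
then any two rows of `A` share mass at least `c`, so the two rows of `A * Z` are weighted averages
of the same column of `Z` that differ only on a mass of at most `1 - c`; the spread of each column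
therefore shrinks by the factor `1 - c`. Iterating over the `⌊(t - r + 1)/(nB + 1)⌋` disjoint
blocks of length `nB + 1` in `Psi(r, t)` shrinks the initial spread `1` to `γ^⌊…⌋`, and the row
`k` of `Psi(1, t) = Psi(1, r - 1) * Psi(r, t)` is an average of rows of `Psi(r, t)`, each within
that bound of row `j`.
-/

open Finset Matrix

noncomputable def ergDelta {m : ℕ} (A : Matrix (Fin m) (Fin m) ℝ) : ℝ :=
  ⨆ j, ⨆ i1, ⨆ i2, |A i1 j - A i2 j|

noncomputable def ergLambda {m : ℕ} (A : Matrix (Fin m) (Fin m) ℝ) : ℝ :=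
  1 - ⨅ i1, ⨅ i2, ∑ j, min (A i1 j) (A i2 j)

def RowStochastic {m : ℕ} (A : Matrix (Fin m) (Fin m) ℝ) : Prop :=
  (∀ i j, 0 ≤ A i j) ∧ ∀ i, ∑ j, A i j = 1

/-- `Psi M r t = M r * M (r+1) * ... * M t` (the identity matrix when `r > t`). -/
noncomputable def Psi {m : ℕ} (M : ℕ → Matrix (Fin m) (Fin m) ℝ) (r t : ℕ) :
    Matrix (Fin m) (Fin m) ℝ :=
  ((List.range' r (t + 1 - r)).map M).prod

variable {m : ℕ}

namespace RowStochastic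

theorem one : RowStochastic (1 : Matrix (Fin m) (Fin m) ℝ) :=
  ⟨fun i j => by by_cases h : i = j <;> simp [one_apply, h], fun i => by simp [one_apply]⟩

theorem mul {A B : Matrix (Fin m) (Fin m) ℝ} (hA : RowStochastic A) (hB : RowStochastic B) :
    RowStochastic (A * B) := by
  simp only [RowStochastic, mul_apply]
  refine ⟨fun i j => sum_nonneg fun p _ => mul_nonneg (hA.1 i p) (hB.1 p j), fun i => ?_⟩
  rw [sum_comm]
  simp [← mul_sum, hB.2, hA.2 i]

theorem list_prod {l : List (Matrix (Fin m) (Fin m) ℝ)} (h : ∀ A ∈ l, RowStochastic A) :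
    RowStochastic l.prod := by
  induction l with
  | nil => exact one
  | cons A l ih =>
    exact (h A List.mem_cons_self).mul (ih fun B hB => h B (List.mem_cons_of_mem A hB))

theorem le_one {A : Matrix (Fin m) (Fin m) ℝ} (hA : RowStochastic A) (i j : Fin m) :
    A i j ≤ 1 :=
  hA.2 i ▸ single_le_sum (fun p _ => hA.1 i p) (mem_univ j)

theorem abs_sub_le_one {A : Matrix (Fin m) (Fin m) ℝ} (hA : RowStochastic A) (k j i : Fin m) :
    |A k i - A j i| ≤ 1 :=
  abs_sub_le_iff.2 ⟨by linarith [hA.le_one k i, hA.1 j i], by linarith [hA.le_one j i, hA.1 k i]⟩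

theorem abs_mul_apply_sub_le {W Z : Matrix (Fin m) (Fin m) ℝ} (hW : RowStochastic W)
    {i : Fin m} {x d : ℝ} (hZ : ∀ p, |Z p i - x| ≤ d) (k : Fin m) :
    |(W * Z) k i - x| ≤ d := by
  have hsum : (W * Z) k i - x = ∑ p, W k p * (Z p i - x) := by
    simp only [mul_apply, mul_sub, sum_sub_distrib, ← sum_mul, hW.2 k, one_mul]
  calc |(W * Z) k i - x| ≤ ∑ p, |W k p * (Z p i - x)| := hsum ▸ abs_sum_le_sum_abs _ _
    _ ≤ ∑ p, W k p * d := sum_le_sum fun p _ => by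
        rw [abs_mul, abs_of_nonneg (hW.1 k p)]
        exact mul_le_mul_of_nonneg_left (hZ p) (hW.1 k p)
    _ = d := by rw [← sum_mul, hW.2 k, one_mul]

theorem abs_mul_apply_sub_mul_apply_le {A Z : Matrix (Fin m) (Fin m) ℝ} {c d : ℝ}
    (hA : RowStochastic A) (hc : ∀ i j, c ≤ A i j) {i : Fin m}
    (hZ : ∀ p q, |Z p i - Z q i| ≤ d) (k j : Fin m) :
    |(A * Z) k i - (A * Z) j i| ≤ (1 - c) * d := by
  suffices key : ∀ k j, (A * Z) k i - (A * Z) j i ≤ (1 - c) * d from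
    abs_sub_le_iff.2 ⟨key k j, key j k⟩
  intro k j
  have : Nonempty (Fin m) := ⟨i⟩
  obtain ⟨pmax, hmax⟩ := Finite.exists_max fun p => Z p i
  obtain ⟨pmin, hmin⟩ := Finite.exists_min fun p => Z p i
  -- `s` is the mass shared by rows `k` and `j`; the remaining masses `a` and `b` both total `ℓ`.
  set s : Fin m → ℝ := fun p => min (A k p) (A j p)
  set ℓ := 1 - ∑ p, s p
  have ha : ∑ p, (A k p - s p) = ℓ := by rw [sum_sub_distrib, hA.2]
  have hb : ∑ p, (A j p - s p) = ℓ := by rw [sum_sub_distrib, hA.2]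
  have hdiff : (A * Z) k i - (A * Z) j i
      = ∑ p, (A k p - s p) * Z p i - ∑ p, (A j p - s p) * Z p i := by
    simp only [mul_apply, sub_mul, sum_sub_distrib]
    ring
  have hupper : ∑ p, (A k p - s p) * Z p i ≤ ℓ * Z pmax i := by
    rw [← ha, sum_mul]
    exact sum_le_sum fun p _ => mul_le_mul_of_nonneg_left (hmax p) (sub_nonneg.2 (min_le_left _ _))
  have hlower : ℓ * Z pmin i ≤ ∑ p, (A j p - s p) * Z p i := by
    rw [← hb, sum_mul]
    exact sum_le_sum fun p _ => mul_le_mul_of_nonneg_left (hmin p) (sub_nonneg.2 (min_le_right _ _))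
  have hℓ_nonneg : 0 ≤ ℓ := ha ▸ sum_nonneg fun p _ => sub_nonneg.2 (min_le_left _ _)
  have hℓ_le : ℓ ≤ 1 - c := by
    have : s i ≤ ∑ p, s p :=
      single_le_sum (fun p _ => le_min (hA.1 k p) (hA.1 j p)) (mem_univ i)
    linarith [le_min (hc k i) (hc j i)]
  have hspread : Z pmax i - Z pmin i ≤ d := (le_abs_self _).trans (hZ pmax pmin)
  have hd : 0 ≤ d := (abs_nonneg _).trans (hZ i i)
  calc (A * Z) k i - (A * Z) j i ≤ ℓ * (Z pmax i - Z pmin i) := by rw [hdiff, mul_sub]; linarith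
    _ ≤ ℓ * d := mul_le_mul_of_nonneg_left hspread hℓ_nonneg
    _ ≤ (1 - c) * d := mul_le_mul_of_nonneg_right hℓ_le hd

end RowStochastic

section Psi

variable {M : ℕ → Matrix (Fin m) (Fin m) ℝ}

theorem rowStochastic_Psi (hM : ∀ τ, RowStochastic (M τ)) (r t : ℕ) :
    RowStochastic (Psi M r t) :=
  RowStochastic.list_prod fun A hA => by
    obtain ⟨τ, -, rfl⟩ := List.mem_map.1 hA
    exact hM τ

theorem Psi_eq_mul_Psi (M : ℕ → Matrix (Fin m) (Fin m) ℝ) {a c t : ℕ} (hac : a ≤ c + 1)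
    (hct : c ≤ t) : Psi M a t = Psi M a c * Psi M (c + 1) t := by
  unfold Psi
  rw [show t + 1 - a = (c + 1 - a) + (t + 1 - (c + 1)) by omega, ← List.range'_append_1,
    show a + (c + 1 - a) = c + 1 by omega, List.map_append, List.prod_append]

theorem abs_Psi_apply_sub_Psi_apply_le {c : ℝ} {L : ℕ} (hM : ∀ τ, RowStochastic (M τ))
    (hblock : ∀ r : ℕ, ∀ i j : Fin m, c ≤ Psi M r (r + L) i j) {N r t : ℕ}
    (h : r + N * (L + 1) ≤ t + 1) (k j i : Fin m) :
    |Psi M r t k i - Psi M r t j i| ≤ (1 - c) ^ N := by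
  induction N generalizing r k j with
  | zero => simpa using (rowStochastic_Psi hM r t).abs_sub_le_one k j i
  | succ N ih =>
    rw [Psi_eq_mul_Psi M (c := r + L) (by omega) (by nlinarith), pow_succ']
    exact (rowStochastic_Psi hM r (r + L)).abs_mul_apply_sub_mul_apply_le (hblock r)
      (fun p q => ih (r := r + L + 1) (by nlinarith) p q) k j

end Psi

theorem Psi_entry_diff_le_general {m n B : ℕ} (β : ℝ)
    (M : ℕ → Matrix (Fin m) (Fin m) ℝ) (hM : ∀ τ, RowStochastic (M τ))
    (hblock : ∀ r : ℕ, ∀ i j : Fin m, β ^ (n * B + 1) ≤ Psi M r (r + n * B) i j) :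
    ∀ r t : ℕ, 1 ≤ r → r ≤ t → ∀ j k i : Fin m,
      |Psi M 1 t k i - Psi M r t j i|
        ≤ (1 - β ^ (n * B + 1)) ^ ((t - r + 1) / (n * B + 1)) := by
  intro r t hr hrt j k i
  have hblocks := Nat.div_mul_le_self (t - r + 1) (n * B + 1)
  have hspread : ∀ p, |Psi M r t p i - Psi M r t j i|
      ≤ (1 - β ^ (n * B + 1)) ^ ((t - r + 1) / (n * B + 1)) :=
    fun p => abs_Psi_apply_sub_Psi_apply_le hM hblock (by omega) p j i
  rw [Psi_eq_mul_Psi M (c := r - 1) (by omega) (by omega), Nat.sub_add_cancel hr]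
  exact (rowStochastic_Psi hM 1 (r - 1)).abs_mul_apply_sub_le hspread k

/-- Pairwise entry bound on products of the transition matrices:
`|Psi_{k,i}(1,t) - Psi_{j,i}(r,t)| ≤ γ^⌊(t-r+1)/(nB+1)⌋` where `γ = 1 - β^(nB+1)`. -/
theorem Psi_entry_diff_le {m n B : ℕ} (β : ℝ) (hβ0 : 0 < β) (hβ1 : β ≤ 1)
    (M : ℕ → Matrix (Fin m) (Fin m) ℝ) (hM : ∀ τ, RowStochastic (M τ))
    (hblock : ∀ r : ℕ, ∀ i j : Fin m, β ^ (n * B + 1) ≤ Psi M r (r + n * B) i j) :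
    ∀ r t : ℕ, 1 ≤ r → r ≤ t → ∀ j k i : Fin m,
      |Psi M 1 t k i - Psi M r t j i|
        ≤ (1 - β ^ (n * B + 1)) ^ ((t - r + 1) / (n * B + 1)) :=
  Psi_entry_diff_le_general β M hM hblock
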